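/- Let n ≥ 2 be even, k an algebraically closed field of characteristic 0, and ω ∈ k^× with ω^n = 1. The 2-cocycle τ_ω on D_n given by τ_ω(r^i s^j, r^k s^l) = ω^{jk} is a coboundary if and only if ω^{n/2} = 1. -/

import Mathlib

/-!
If `μ` trivialises `τ_ω`, then `i ↦ μ (r i)` is a character of `ZMod n`, so `ρ = μ (r 1)`
satisfies `ρ ^ n = 1`, and the cocycle identity at `(r 1, sr 1)` and `(sr 0, r 1)` gives
`ω = ρ ^ 2`. Conversely, if `ω = ρ ^ 2` with `ρ ^ n = 1`, then `μ (r i) = ρ ^ i`,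
`μ (sr i) = ρ ^ (-i)` trivialises `τ_ω`. Over an algebraically closed field `ω` has a square root
`ρ`, and `ρ ^ n = ω ^ (n / 2)` for even `n`.
-/

/-- A 2-cocycle is a coboundary if it is the differential of some `μ` with `μ(1) = 1`. -/
def IsCoboundary {H M : Type*} [Group H] [Group M] (τ : H → H → M) : Prop :=
  ∃ μ : H → M, μ 1 = 1 ∧ ∀ g h, τ g h = μ g * μ h * (μ (g * h))⁻¹

/-- The 2-cocycle `τ_ω` on the dihedral group `D_n`, given on elements written `r^i s^j`
by `τ_ω(r^i s^j, r^k s^l) = ω^{jk}` (note `r^k s = sr (-k)` in `DihedralGroup n`). -/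
def tauOmega {K : Type*} [Field K] (n : ℕ) (ω : Kˣ) :
    DihedralGroup n → DihedralGroup n → Kˣ := fun g h =>
  match g, h with
  | DihedralGroup.r _, _ => 1
  | DihedralGroup.sr _, DihedralGroup.r m => ω ^ m.val
  | DihedralGroup.sr _, DihedralGroup.sr m => ω ^ (-m).val

open DihedralGroup

theorem isCoboundary_iff_exists_map_mul {H M : Type*} [Group H] [CommGroup M] {τ : H → H → M} :
    IsCoboundary τ ↔ ∃ μ : H → M, μ 1 = 1 ∧ ∀ g h, μ (g * h) = μ g * μ h / τ g h := by
  refine exists_congr fun μ => and_congr_right fun _ => forall₂_congr fun g h => ?_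
  rw [eq_mul_inv_iff_mul_eq, eq_div_iff_mul_eq', mul_comm]

theorem AddChar.map_one_pow_eq_one {M : Type*} [Monoid M] {n : ℕ} (ψ : AddChar (ZMod n) M) :
    ψ 1 ^ n = 1 := by
  rw [← ψ.map_nsmul_eq_pow, nsmul_one, ZMod.natCast_self, ψ.map_zero_eq_one]

theorem exists_pow_eq_one_and_sq_eq_iff {M : Type*} [Monoid M] {n : ℕ} (hn : Even n) {ω : M}
    (hω : IsSquare ω) : (∃ ρ : M, ρ ^ n = 1 ∧ ρ ^ 2 = ω) ↔ ω ^ (n / 2) = 1 := by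
  have h2n : 2 * (n / 2) = n := Nat.mul_div_cancel' hn.two_dvd
  constructor
  · rintro ⟨ρ, hρ, rfl⟩
    rw [← pow_mul, h2n, hρ]
  · intro h
    obtain ⟨ρ, rfl⟩ := hω
    exact ⟨ρ, by rw [← h2n, pow_mul, sq, h], sq ρ⟩

theorem IsAlgClosed.isSquare_unit {K : Type*} [Field K] [IsAlgClosed K] (u : Kˣ) : IsSquare u := by
  obtain ⟨z, hz⟩ := IsAlgClosed.exists_eq_mul_self (u : K)
  have hz0 : z ≠ 0 := by
    rintro rfl
    simp at hz
  exact ⟨Units.mk0 z hz0, Units.ext hz⟩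

section

variable {K : Type*} [Field K] {n : ℕ} {ω : Kˣ}

@[simp] theorem tauOmega_r (i : ZMod n) (g : DihedralGroup n) : tauOmega n ω (r i) g = 1 := rfl

@[simp] theorem tauOmega_sr_r (i j : ZMod n) : tauOmega n ω (sr i) (r j) = ω ^ j.val := rfl

@[simp] theorem tauOmega_sr_sr (i j : ZMod n) : tauOmega n ω (sr i) (sr j) = ω ^ (-j).val := rfl

theorem exists_pow_eq_one_and_sq_eq_of_isCoboundary_tauOmega [Fact (1 < n)]
    (h : IsCoboundary (tauOmega n ω)) : ∃ ρ : Kˣ, ρ ^ n = 1 ∧ ρ ^ 2 = ω := by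
  obtain ⟨μ, hμ1, hμ⟩ := isCoboundary_iff_exists_map_mul.mp h
  let ψ : AddChar (ZMod n) Kˣ :=
    { toFun := fun i => μ (r i)
      map_zero_eq_one' := hμ1
      map_add_eq_mul' := fun i j => by simpa using hμ (r i) (r j) }
  refine ⟨ψ 1, ψ.map_one_pow_eq_one, ?_⟩
  have hs0 : μ (sr 0) = μ (r 1) * μ (sr 1) := by simpa using hμ (r 1) (sr 1)
  have hs1 : μ (sr 1) = μ (sr 0) * μ (r 1) / ω := by simpa [ZMod.val_one] using hμ (sr 0) (r 1)
  rw [hs0, eq_div_iff_mul_eq'] at hs1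
  show μ (r 1) ^ 2 = ω
  exact mul_left_cancel (a := μ (sr 1)) (by rw [hs1, sq]; ac_rfl)

theorem isCoboundary_tauOmega_sq [NeZero n] {ρ : Kˣ} (hρ : ρ ^ n = 1) :
    IsCoboundary (tauOmega n (ρ ^ 2)) := by
  set ψ := AddChar.zmodChar n hρ
  have hsq (m : ZMod n) : (ρ ^ 2) ^ m.val = ψ m ^ 2 := pow_right_comm ..
  refine isCoboundary_iff_exists_map_mul.mpr
    ⟨fun | r i => ψ i | sr i => (ψ i)⁻¹, ψ.map_zero_eq_one, ?_⟩
  rintro (i | i) (j | j) <;> ext <;>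
    simp [r_mul_r, r_mul_sr, sr_mul_r, sr_mul_sr, AddChar.map_add_eq_mul, AddChar.map_sub_eq_div,
      AddChar.map_neg_eq_inv, hsq] <;> field_simp

theorem isCoboundary_tauOmega_iff_exists_pow_eq_one_and_sq_eq [Fact (1 < n)] :
    IsCoboundary (tauOmega n ω) ↔ ∃ ρ : Kˣ, ρ ^ n = 1 ∧ ρ ^ 2 = ω :=
  ⟨exists_pow_eq_one_and_sq_eq_of_isCoboundary_tauOmega,
    fun ⟨_, hρ, hω⟩ => hω ▸ isCoboundary_tauOmega_sq hρ⟩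

end

theorem tauOmega_isCoboundary_iff_general {K : Type*} [Field K] [IsAlgClosed K]
    (n : ℕ) (hn : 2 ≤ n) (heven : Even n) (ω : Kˣ) :
    IsCoboundary (tauOmega n ω) ↔ ω ^ (n / 2) = 1 := by
  have : Fact (1 < n) := ⟨hn⟩
  rw [isCoboundary_tauOmega_iff_exists_pow_eq_one_and_sq_eq,
    exists_pow_eq_one_and_sq_eq_iff heven (IsAlgClosed.isSquare_unit ω)]

/-- For `n ≥ 2` even, `k` algebraically closed of characteristic `0`, and `ω ∈ kˣ` with
`ω^n = 1`, the 2-cocycle `τ_ω` on `D_n` is a coboundary iff `ω^{n/2} = 1`. -/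
theorem tauOmega_isCoboundary_iff {K : Type*} [Field K] [IsAlgClosed K] [CharZero K]
    (n : ℕ) (hn : 2 ≤ n) (heven : Even n) (ω : Kˣ) (hω : ω ^ n = 1) :
    IsCoboundary (tauOmega n ω) ↔ ω ^ (n / 2) = 1 :=
  tauOmega_isCoboundary_iff_general n hn heven ω
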